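/- arXiv:2511.03713 — 3 statements merged into one kernel-verified Lean document; each statement's English description precedes it below -/
import Mathlib

section
/- Let a, b ∈ ℝ with b ≠ 0, let R ∈ so(n−2), and let D = diag(a, b, R, −b, −a) ∈ so(2,n) (block-diagonal). Then the only two-dimensional subspaces Π ⊂ V which are totally isotropic for B (i.e., B vanishes identically on Π), contain e_0, and satisfy D(Π) ⊆ Π, are span(e_0, e_1) and span(e_0, e_n). -/
open Matrix

noncomputable section

/-- Gram matrix of the quadratic form `Q(x) = 2x₀x_{n+1} + 2x₁xₙ + x₂² + ⋯ + x_{n-1}²`. -/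
def Jmat (n : ℕ) : Matrix (Fin (n+2)) (Fin (n+2)) ℝ :=
  fun i j =>
    if (i.val = 0 ∧ j.val = n+1) ∨ (i.val = n+1 ∧ j.val = 0)
      ∨ (i.val = 1 ∧ j.val = n) ∨ (i.val = n ∧ j.val = 1) then 1
    else if i = j ∧ 2 ≤ i.val ∧ i.val ≤ n-1 then 1 else 0

/-- The symmetric bilinear form `B` of signature `(2,n)` on `V = ℝ^{n+2}`. -/
def Bf (n : ℕ) (u v : Fin (n+2) → ℝ) : ℝ := u ⬝ᵥ (Jmat n *ᵥ v)

/-- The standard basis vectors `e₀, …, e_{n+1}` of `V = ℝ^{n+2}`. -/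
def eV (n : ℕ) (i : Fin (n+2)) : Fin (n+2) → ℝ := Pi.single i 1

/-- The block-diagonal matrix `diag(c₀, c₁, R, cₙ, c_{n+1})`, acting by `c₀` on `e₀`,
by `c₁` on `e₁`, by `R` on `span(e₂, …, e_{n−1})`, by `cₙ` on `eₙ` and by `c_{n+1}`
on `e_{n+1}`. -/
def bdiag (n : ℕ) (c0 c1 : ℝ) (R : Matrix (Fin (n-2)) (Fin (n-2)) ℝ) (cn cn1 : ℝ) :
    Matrix (Fin (n+2)) (Fin (n+2)) ℝ :=
  fun i j =>
    if h : 2 ≤ i.val ∧ i.val ≤ n-1 ∧ 2 ≤ j.val ∧ j.val ≤ n-1 then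
      R ⟨i.val - 2, by omega⟩ ⟨j.val - 2, by omega⟩
    else if i = j then
      (if i.val = 0 then c0 else if i.val = 1 then c1
       else if i.val = n then cn else if i.val = n+1 then cn1 else 0)
    else 0

/-- Skew-symmetry: `R ∈ so(m)`. -/
def skew {m : ℕ} (R : Matrix (Fin m) (Fin m) ℝ) : Prop := Rᵀ = -R

section
variable {n : ℕ}

lemma Jv_zero (hn : 3 ≤ n) (v : Fin (n+2) → ℝ) :
    (Jmat n *ᵥ v) 0 = v ⟨n+1, by omega⟩ := by
  simp only [Matrix.mulVec, dotProduct]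
  rw [Finset.sum_eq_single (⟨n+1, by omega⟩ : Fin (n+2))]
  · rw [show Jmat n 0 ⟨n+1, by omega⟩ = 1 by
      simp only [Jmat]
      rw [if_pos (by simp)], one_mul]
  · intro b _ hb
    have hbv : (b : ℕ) ≠ n+1 := by
      simpa [Fin.ext_iff] using hb
    simp only [Jmat]
    rw [if_neg (by simp only [Fin.val_zero]; omega), if_neg (by
      rintro ⟨rfl, h2, h3⟩
      simp at h2), zero_mul]
  · intro h; exact absurd (Finset.mem_univ _) h

lemma Jv_one (hn : 3 ≤ n) (v : Fin (n+2) → ℝ) :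
    (Jmat n *ᵥ v) 1 = v ⟨n, by simp⟩ := by
  simp only [Matrix.mulVec, dotProduct]
  rw [Finset.sum_eq_single (⟨n, by simp⟩ : Fin (n+2))]
  · rw [show Jmat n 1 ⟨n, by simp⟩ = 1 by
      simp only [Jmat]
      rw [if_pos (by simp)], one_mul]
  · intro b _ hb
    have hbv : (b : ℕ) ≠ n := by simpa [Fin.ext_iff] using hb
    simp only [Jmat, Fin.val_one]
    rw [if_neg (by omega)]
    simp
  · intro h; exact absurd (Finset.mem_univ _) h

lemma Jv_n (hn : 3 ≤ n) (v : Fin (n+2) → ℝ) :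
    (Jmat n *ᵥ v) ⟨n, by simp⟩ = v 1 := by
  simp only [Matrix.mulVec, dotProduct]
  rw [Finset.sum_eq_single (1 : Fin (n+2))]
  · rw [show Jmat n ⟨n, by simp⟩ 1 = 1 by
      simp only [Jmat]
      rw [if_pos (by simp)], one_mul]
  · intro b _ hb
    have hbv : (b : ℕ) ≠ 1 := by simpa [Fin.ext_iff] using hb
    simp only [Jmat]
    rw [if_neg (by omega), if_neg (by
      rintro ⟨hbe, h2, h3⟩
      omega), zero_mul]
  · intro h; exact absurd (Finset.mem_univ _) h

lemma Jv_top (hn : 3 ≤ n) (v : Fin (n+2) → ℝ) :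
    (Jmat n *ᵥ v) ⟨n+1, by omega⟩ = v 0 := by
  simp only [Matrix.mulVec, dotProduct]
  rw [Finset.sum_eq_single (0 : Fin (n+2))]
  · rw [show Jmat n ⟨n+1, by omega⟩ 0 = 1 by
      simp only [Jmat]
      rw [if_pos (by simp)], one_mul]
  · intro b _ hb
    have hbv : (b : ℕ) ≠ 0 := fun h => hb (Fin.ext (h.trans (Fin.val_zero _).symm))
    simp only [Jmat]
    rw [if_neg (by omega), if_neg (by
      rintro ⟨hbe, h2, h3⟩
      omega), zero_mul]
  · intro h; exact absurd (Finset.mem_univ _) h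

lemma Jv_mid (hn : 3 ≤ n) (v : Fin (n+2) → ℝ) (i : Fin (n+2))
    (h2 : 2 ≤ i.val) (h3 : i.val ≤ n-1) :
    (Jmat n *ᵥ v) i = v i := by
  simp only [Matrix.mulVec, dotProduct]
  rw [Finset.sum_eq_single i]
  · rw [show Jmat n i i = 1 by
      simp only [Jmat]
      rw [if_neg (by omega), if_pos (by exact ⟨trivial, h2, h3⟩)], one_mul]
  · intro b _ hb
    have hbv : (b : ℕ) ≠ (i : ℕ) := by simpa [Fin.ext_iff] using hb
    simp only [Jmat]
    rw [if_neg (by omega), if_neg (by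
      rintro ⟨rfl, _⟩; exact hbv rfl), zero_mul]
  · intro h; exact absurd (Finset.mem_univ _) h
end

section
variable {n : ℕ}

lemma Bf_e0 (hn : 3 ≤ n) (v : Fin (n+2) → ℝ) :
    Bf n (eV n 0) v = v ⟨n+1, by omega⟩ := by
  rw [Bf, eV, single_dotProduct, one_mul, Jv_zero hn]

/-- The quadratic form. -/
lemma Bf_self (hn : 3 ≤ n) (u : Fin (n+2) → ℝ) :
    Bf n u u = 2 * (u 0 * u ⟨n+1, by omega⟩) + 2 * (u 1 * u ⟨n, by simp⟩)
      + ∑ i ∈ Finset.univ.filter (fun i : Fin (n+2) => 2 ≤ i.val ∧ i.val ≤ n-1), (u i)^2 := by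
  rw [Bf, dotProduct]
  rw [← Finset.sum_filter_add_sum_filter_not Finset.univ
    (fun i : Fin (n+2) => 2 ≤ i.val ∧ i.val ≤ n-1)]
  have hmid : ∑ i ∈ Finset.univ.filter (fun i : Fin (n+2) => 2 ≤ i.val ∧ i.val ≤ n-1),
      u i * (Jmat n *ᵥ u) i
      = ∑ i ∈ Finset.univ.filter (fun i : Fin (n+2) => 2 ≤ i.val ∧ i.val ≤ n-1), (u i)^2 := by
    refine Finset.sum_congr rfl fun i hi => ?_
    simp only [Finset.mem_filter] at hi
    rw [Jv_mid hn u i hi.2.1 hi.2.2, sq]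
  rw [hmid]
  have hset : Finset.univ.filter (fun i : Fin (n+2) => ¬(2 ≤ i.val ∧ i.val ≤ n-1))
      = {(0 : Fin (n+2)), 1, ⟨n, by simp⟩, ⟨n+1, by omega⟩} := by
    ext i
    simp only [Finset.mem_filter, Finset.mem_univ, true_and, Finset.mem_insert,
      Finset.mem_singleton, Fin.ext_iff, Fin.val_zero, Fin.val_one]
    have := i.isLt
    omega
  rw [hset]
  have h01 : ((0:Fin (n+2))) ≠ 1 := by simp [Fin.ext_iff]
  rw [Finset.sum_insert (by simp only [Finset.mem_insert, Finset.mem_singleton, Fin.ext_iff, Fin.val_zero, Fin.val_one]; omega),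
      Finset.sum_insert (by simp only [Finset.mem_insert, Finset.mem_singleton, Fin.ext_iff, Fin.val_zero, Fin.val_one]; omega),
      Finset.sum_insert (by simp only [Finset.mem_insert, Finset.mem_singleton, Fin.ext_iff, Fin.val_zero, Fin.val_one]; omega),
      Finset.sum_singleton]
  rw [Jv_zero hn, Jv_one hn, Jv_n hn, Jv_top hn]
  ring

lemma bdiag_mul_one (hn : 3 ≤ n) (c0 c1 cn cn1 : ℝ)
    (R : Matrix (Fin (n-2)) (Fin (n-2)) ℝ) (u : Fin (n+2) → ℝ) :
    (bdiag n c0 c1 R cn cn1 *ᵥ u) 1 = c1 * u 1 := by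
  simp only [Matrix.mulVec, dotProduct]
  rw [Finset.sum_eq_single (1 : Fin (n+2))]
  · have : bdiag n c0 c1 R cn cn1 1 1 = c1 := by
      simp only [bdiag, Fin.val_one]
      rw [dif_neg (by omega)]
      split_ifs <;> first | rfl | omega | simp_all
    rw [this]
  · intro b _ hb
    have : bdiag n c0 c1 R cn cn1 1 b = 0 := by
      simp only [bdiag, Fin.val_one]
      rw [dif_neg (by omega), if_neg (Ne.symm hb)]
    rw [this, zero_mul]
  · intro h; exact absurd (Finset.mem_univ _) h

lemma bdiag_mul_n (hn : 3 ≤ n) (c0 c1 cn cn1 : ℝ)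
    (R : Matrix (Fin (n-2)) (Fin (n-2)) ℝ) (u : Fin (n+2) → ℝ) :
    (bdiag n c0 c1 R cn cn1 *ᵥ u) ⟨n, by simp⟩ = cn * u ⟨n, by simp⟩ := by
  simp only [Matrix.mulVec, dotProduct]
  rw [Finset.sum_eq_single (⟨n, by simp⟩ : Fin (n+2))]
  · have : bdiag n c0 c1 R cn cn1 ⟨n, by simp⟩ ⟨n, by simp⟩ = cn := by
      simp only [bdiag]
      rw [dif_neg (by omega)]
      split_ifs <;> first | rfl | omega | simp_all
    rw [this]
  · intro b _ hb
    have : bdiag n c0 c1 R cn cn1 ⟨n, by simp⟩ b = 0 := by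
      simp only [bdiag]
      rw [dif_neg (by omega), if_neg (Ne.symm hb)]
    rw [this, zero_mul]
  · intro h; exact absurd (Finset.mem_univ _) h

lemma bdiag_e (hn : 3 ≤ n) (c0 c1 cn cn1 : ℝ)
    (R : Matrix (Fin (n-2)) (Fin (n-2)) ℝ) (j : Fin (n+2)) (c : ℝ)
    (hj : ¬ (2 ≤ j.val ∧ j.val ≤ n-1))
    (hc : c = if j.val = 0 then c0 else if j.val = 1 then c1
       else if j.val = n then cn else if j.val = n+1 then cn1 else 0) :
    bdiag n c0 c1 R cn cn1 *ᵥ (Pi.single j 1 : Fin (n+2) → ℝ)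
      = c • (Pi.single j 1 : Fin (n+2) → ℝ) := by
  rw [Matrix.mulVec_single]
  funext i
  simp only [Pi.smul_apply, smul_eq_mul, Matrix.col_apply, op_smul_eq_mul]
  rcases eq_or_ne i j with rfl | hij
  · rw [Pi.single_eq_same, mul_one, mul_one, hc]
    simp only [bdiag]
    rw [dif_neg (by omega)]
    split_ifs <;> first | rfl | omega | simp_all
  · rw [Pi.single_eq_of_ne hij, mul_zero, mul_one]
    simp only [bdiag]
    rw [dif_neg (by omega), if_neg hij]
end

section
variable {n : ℕ}

lemma aux_pair {x y : Fin (n+2) → ℝ} (hx : x ≠ 0) (hy : ∀ c : ℝ, c • x ≠ y) :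
    Module.finrank ℝ (Submodule.span ℝ ({x, y} : Set (Fin (n+2) → ℝ))) = 2 := by
  classical
  have hind := linearIndepOn_id_pair hx hy
  rw [finrank_span_set_eq_card hind]
  have hxy : x ≠ y := fun h => hy 1 (by rw [one_smul, h])
  simp [Set.toFinset_insert, Set.toFinset_singleton, hxy]

lemma Bf_expand (x y z w : Fin (n+2) → ℝ) (s t p q : ℝ) :
    Bf n (s • x + t • y) (p • z + q • w)
      = s*p*Bf n x z + s*q*Bf n x w + t*p*Bf n y z + t*q*Bf n y w := by
  simp only [Bf, Matrix.mulVec_add, Matrix.mulVec_smul, add_dotProduct,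
    smul_dotProduct, dotProduct_add, dotProduct_smul, smul_eq_mul]
  ring

lemma Jmat_eq_zero (i j : Fin (n+2))
    (h : ¬((i.val = 0 ∧ j.val = n+1) ∨ (i.val = n+1 ∧ j.val = 0)
      ∨ (i.val = 1 ∧ j.val = n) ∨ (i.val = n ∧ j.val = 1)))
    (h2 : ¬(i = j ∧ 2 ≤ i.val ∧ i.val ≤ n-1)) : Jmat n i j = 0 := by
  simp only [Jmat]
  rw [if_neg h, if_neg h2]

lemma Bf_basis (i j : Fin (n+2)) : Bf n (eV n i) (eV n j) = Jmat n i j := by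
  rw [Bf, eV, eV, Matrix.mulVec_single, single_dotProduct, one_mul, Pi.smul_apply, Matrix.col_apply, op_smul_eq_mul, mul_one]
end

/-- For `D = diag(a, b, R, −b, −a)` with `b ≠ 0` and `R ∈ so(n−2)`,
the only totally isotropic two-dimensional subspaces of `V` containing `e₀` and
invariant under `D` are `span(e₀, e₁)` and `span(e₀, eₙ)`. -/
theorem invariant_isotropic_planes (n : ℕ) (hn : 3 ≤ n) (a b : ℝ) (hb : b ≠ 0)
    (R : Matrix (Fin (n-2)) (Fin (n-2)) ℝ) (hR : skew R) :
    ∀ W : Submodule ℝ (Fin (n+2) → ℝ),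
      (Module.finrank ℝ W = 2 ∧ (∀ u ∈ W, ∀ v ∈ W, Bf n u v = 0) ∧ eV n 0 ∈ W ∧
        (∀ u ∈ W, (bdiag n a b R (-b) (-a)) *ᵥ u ∈ W)) ↔
      (W = Submodule.span ℝ {eV n 0, eV n 1} ∨
        W = Submodule.span ℝ {eV n 0, eV n ⟨n, by omega⟩}) := by
  have h10 : (1 : Fin (n+2)) ≠ 0 := by simp [Fin.ext_iff]
  have hN0 : (⟨n, by omega⟩ : Fin (n+2)) ≠ 0 := by simp [Fin.ext_iff]; omega
  have he0ne : eV n 0 ≠ 0 := by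
    intro h
    have := congrFun h 0
    simp [eV] at this
  have he1ne : ∀ c : ℝ, c • eV n 0 ≠ eV n 1 := by
    intro c h
    have := congrFun h 1
    simp [eV, Pi.single_eq_of_ne h10] at this
  have heNne : ∀ c : ℝ, c • eV n 0 ≠ eV n ⟨n, by omega⟩ := by
    intro c h
    have := congrFun h ⟨n, by omega⟩
    simp [eV, Pi.single_eq_of_ne hN0] at this
  -- the four Jmat entries we need
  have hJ00 : Jmat n 0 0 = (0:ℝ) := Jmat_eq_zero _ _ (by first | (simp; omega) | simp | omega) (by rintro ⟨-, h2, -⟩; simp at h2)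
  have hJ01 : Jmat n 0 1 = (0:ℝ) := Jmat_eq_zero _ _ (by first | (simp; omega) | simp | omega) (by rintro ⟨h, -⟩; exact h10 h.symm)
  have hJ10 : Jmat n 1 0 = (0:ℝ) := Jmat_eq_zero _ _ (by first | (simp; omega) | simp | omega) (by rintro ⟨h, -⟩; exact h10 h)
  have hJ11 : Jmat n 1 1 = (0:ℝ) := Jmat_eq_zero _ _ (by first | (simp; omega) | simp | omega) (by rintro ⟨-, h2, -⟩; first | (simp at h2; omega) | simp at h2)
  have hJ0N : Jmat n 0 ⟨n, by omega⟩ = (0:ℝ) := Jmat_eq_zero _ _ (by first | (simp; omega) | simp | omega) (by rintro ⟨h, -⟩; exact hN0 h.symm)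
  have hJN0 : Jmat n ⟨n, by omega⟩ 0 = (0:ℝ) := Jmat_eq_zero _ _ (by first | (simp; omega) | simp | omega) (by rintro ⟨h, -⟩; exact hN0 h)
  have hJNN : Jmat n ⟨n, by omega⟩ ⟨n, by omega⟩ = (0:ℝ) := Jmat_eq_zero _ _ (by first | (simp; omega) | simp | omega) (by rintro ⟨-, -, h3⟩; first | (simp at h3; omega) | simp at h3)
  -- action of D on the basis vectors
  have hD0 : bdiag n a b R (-b) (-a) *ᵥ eV n 0 = a • eV n 0 := by
    rw [eV]; exact bdiag_e hn a b (-b) (-a) R 0 a (by simp) (by simp)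
  have hD1 : bdiag n a b R (-b) (-a) *ᵥ eV n 1 = b • eV n 1 := by
    rw [eV]; exact bdiag_e hn a b (-b) (-a) R 1 b (by simp) (by simp)
  have hDN : bdiag n a b R (-b) (-a) *ᵥ eV n ⟨n, by omega⟩ = (-b) • eV n ⟨n, by omega⟩ := by
    rw [eV]
    have hvN : ((⟨n, by omega⟩ : Fin (n+2)) : ℕ) = n := rfl
    refine bdiag_e hn a b (-b) (-a) R ⟨n, by omega⟩ (-b) (by rw [hvN]; omega) ?_
    rw [hvN, if_neg (by omega), if_neg (by omega), if_pos rfl]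
  intro W
  constructor
  · rintro ⟨hrank, hiso, he0W, hinv⟩
    have hKlt : Submodule.span ℝ {eV n 0} < W := by
      refine lt_of_le_of_ne ((Submodule.span_le).mpr (by simpa using he0W)) ?_
      intro hEq
      have h1 : Module.finrank ℝ (Submodule.span ℝ ({eV n 0} : Set (Fin (n+2) → ℝ))) = 1 :=
        finrank_span_singleton he0ne
      rw [hEq, hrank] at h1
      omega
    obtain ⟨u, huW, huK⟩ := SetLike.exists_of_lt hKlt
    have hune : ∀ c : ℝ, c • eV n 0 ≠ u := by
      intro c hc; exact huK (Submodule.mem_span_singleton.mpr ⟨c, hc⟩)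
    have hWeq : Submodule.span ℝ {eV n 0, u} = W := by
      refine Submodule.eq_of_le_of_finrank_le (Submodule.span_le.mpr ?_) ?_
      · rintro x (rfl | rfl) <;> assumption
      · rw [hrank, aux_pair he0ne hune]
    have hDu := hinv u huW
    rw [← hWeq] at hDu
    obtain ⟨μ, lam, hDrep⟩ := Submodule.mem_span_pair.mp hDu
    have hT : u ⟨n+1, by omega⟩ = 0 := by
      have := hiso (eV n 0) he0W u huW
      rwa [Bf_e0 hn] at this
    have h1 : lam * u 1 = b * u 1 := by
      have h := congrFun hDrep 1
      simp only [Pi.add_apply, Pi.smul_apply, smul_eq_mul] at h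
      rw [bdiag_mul_one hn, show eV n 0 1 = 0 from Pi.single_eq_of_ne h10 1, mul_zero, zero_add] at h
      exact h
    have hNc : lam * u ⟨n, by omega⟩ = -b * u ⟨n, by omega⟩ := by
      have h := congrFun hDrep ⟨n, by omega⟩
      simp only [Pi.add_apply, Pi.smul_apply, smul_eq_mul] at h
      rw [bdiag_mul_n hn, show eV n 0 ⟨n, by omega⟩ = 0 from Pi.single_eq_of_ne hN0 1, mul_zero, zero_add] at h
      exact h
    have h1n : u 1 * u ⟨n, by omega⟩ = 0 := by
      by_cases hu1 : u 1 = 0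
      · rw [hu1, zero_mul]
      · have hlam : lam = b := mul_right_cancel₀ hu1 h1
        rw [hlam] at hNc
        have : (2*b) * u ⟨n, by omega⟩ = 0 := by linarith
        have := (mul_eq_zero.mp this).resolve_left (by intro h; apply hb; linarith)
        rw [this, mul_zero]
    have hisoU := hiso u huW u huW
    rw [Bf_self hn, hT, h1n] at hisoU
    have hsum0 : ∑ i ∈ Finset.univ.filter (fun i : Fin (n+2) => 2 ≤ i.val ∧ i.val ≤ n-1), (u i)^2 = 0 := by
      linarith
    have hmid : ∀ i : Fin (n+2), (2 ≤ i.val ∧ i.val ≤ n-1) → u i = 0 := by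
      intro i hi
      have h := (Finset.sum_eq_zero_iff_of_nonneg (fun j _ => sq_nonneg (u j))).mp hsum0 i
        (by simp [Finset.mem_filter, hi])
      exact pow_eq_zero_iff (by norm_num) |>.mp h
    have hrep : u = u 0 • eV n 0 + u 1 • eV n 1 + u ⟨n, by omega⟩ • eV n ⟨n, by omega⟩ := by
      funext i
      simp only [Pi.add_apply, Pi.smul_apply, smul_eq_mul, eV]
      by_cases hi0 : i = 0
      · subst hi0
        rw [Pi.single_eq_same, Pi.single_eq_of_ne h10.symm, Pi.single_eq_of_ne hN0.symm]
        ring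
      · by_cases hi1 : i = 1
        · subst hi1
          rw [Pi.single_eq_same, Pi.single_eq_of_ne h10, Pi.single_eq_of_ne (by simp only [ne_eq, Fin.ext_iff, Fin.val_one]; omega)]
          ring
        · by_cases hiN : i = ⟨n, by omega⟩
          · subst hiN
            rw [Pi.single_eq_same, Pi.single_eq_of_ne hN0, Pi.single_eq_of_ne (by simp only [ne_eq, Fin.ext_iff, Fin.val_one]; omega)]
            ring
          · rw [Pi.single_eq_of_ne hi0, Pi.single_eq_of_ne hi1, Pi.single_eq_of_ne hiN]
            have v0 : (i:ℕ) ≠ 0 := fun h => hi0 (Fin.ext h)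
            have v1 : (i:ℕ) ≠ 1 := fun h => hi1 (Fin.ext h)
            have vN : (i:ℕ) ≠ n := fun h => hiN (Fin.ext h)
            have hlt := i.isLt
            have : u i = 0 := by
              by_cases hm : 2 ≤ (i:ℕ) ∧ (i:ℕ) ≤ n-1
              · exact hmid i hm
              · have : i = ⟨n+1, by omega⟩ := Fin.ext (show (i:ℕ) = n+1 by omega)
                rw [this]; exact hT
            rw [this]; ring
    by_cases hu1 : u 1 = 0
    · -- the e_n case
      have hun : u ⟨n, by omega⟩ ≠ 0 := by
        intro h
        have hr := hrep
        rw [hu1, h, zero_smul, zero_smul, add_zero, add_zero] at hr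
        exact hune (u 0) hr.symm
      right
      obtain ⟨α, γ, hαγ, hγ⟩ : ∃ α γ : ℝ, u = α • eV n 0 + γ • eV n ⟨n, by omega⟩ ∧ γ ≠ 0 := by
        have hr := hrep
        rw [hu1, zero_smul, add_zero] at hr
        exact ⟨u 0, u ⟨n, by omega⟩, hr, hun⟩
      have heNW : eV n ⟨n, by omega⟩ ∈ W := by
        have key : eV n ⟨n, by omega⟩ = γ⁻¹ • (u - α • eV n 0) := by
          rw [hαγ, add_sub_cancel_left, smul_smul, inv_mul_cancel₀ hγ, one_smul]
        rw [key]
        exact Submodule.smul_mem _ _ (Submodule.sub_mem _ huW (Submodule.smul_mem _ _ he0W))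
      refine (Submodule.eq_of_le_of_finrank_le (Submodule.span_le.mpr ?_) ?_).symm
      · rintro x (rfl | rfl) <;> assumption
      · rw [hrank, aux_pair he0ne heNne]
    · -- the e_1 case
      have hun : u ⟨n, by omega⟩ = 0 := by
        rcases mul_eq_zero.mp h1n with h | h
        · exact absurd h hu1
        · exact h
      left
      obtain ⟨α, β, hαβ, hβ⟩ : ∃ α β : ℝ, u = α • eV n 0 + β • eV n 1 ∧ β ≠ 0 := by
        have hr := hrep
        rw [hun, zero_smul, add_zero] at hr
        exact ⟨u 0, u 1, hr, hu1⟩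
      have he1W : eV n 1 ∈ W := by
        have key : eV n 1 = β⁻¹ • (u - α • eV n 0) := by
          rw [hαβ, add_sub_cancel_left, smul_smul, inv_mul_cancel₀ hβ, one_smul]
        rw [key]
        exact Submodule.smul_mem _ _ (Submodule.sub_mem _ huW (Submodule.smul_mem _ _ he0W))
      refine (Submodule.eq_of_le_of_finrank_le (Submodule.span_le.mpr ?_) ?_).symm
      · rintro x (rfl | rfl) <;> assumption
      · rw [hrank, aux_pair he0ne he1ne]
  · rintro (rfl | rfl)
    · refine ⟨aux_pair he0ne he1ne, ?_, Submodule.subset_span (Or.inl rfl), ?_⟩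
      · intro u hu v hv
        obtain ⟨s, t, rfl⟩ := Submodule.mem_span_pair.mp hu
        obtain ⟨p, q, rfl⟩ := Submodule.mem_span_pair.mp hv
        rw [Bf_expand, Bf_basis, Bf_basis, Bf_basis, Bf_basis, hJ00, hJ01, hJ10, hJ11]
        ring
      · intro u hu
        obtain ⟨s, t, rfl⟩ := Submodule.mem_span_pair.mp hu
        rw [Matrix.mulVec_add, Matrix.mulVec_smul, Matrix.mulVec_smul, hD0, hD1]
        exact Submodule.add_mem _
          (Submodule.smul_mem _ _ (Submodule.smul_mem _ _ (Submodule.subset_span (Or.inl rfl))))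
          (Submodule.smul_mem _ _ (Submodule.smul_mem _ _ (Submodule.subset_span (Or.inr rfl))))
    · refine ⟨aux_pair he0ne heNne, ?_, Submodule.subset_span (Or.inl rfl), ?_⟩
      · intro u hu v hv
        obtain ⟨s, t, rfl⟩ := Submodule.mem_span_pair.mp hu
        obtain ⟨p, q, rfl⟩ := Submodule.mem_span_pair.mp hv
        rw [Bf_expand, Bf_basis, Bf_basis, Bf_basis, Bf_basis, hJ00, hJ0N, hJN0, hJNN]
        ring
      · intro u hu
        obtain ⟨s, t, rfl⟩ := Submodule.mem_span_pair.mp hu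
        rw [Matrix.mulVec_add, Matrix.mulVec_smul, Matrix.mulVec_smul, hD0, hDN]
        exact Submodule.add_mem _
          (Submodule.smul_mem _ _ (Submodule.smul_mem _ _ (Submodule.subset_span (Or.inl rfl))))
          (Submodule.smul_mem _ _ (Submodule.smul_mem _ _ (Submodule.subset_span (Or.inr rfl))))
end
end

section
/- For every v ∈ V with Q(v) = 0, B(v, e_0) = 0 and v ∉ ℝe_0, there exist p ∈ P and c ∈ ℝ with c ≠ 0 such that p v = c e_1. In other words, P acts transitively on the set of isotropic lines ℓ ≠ ℝe_0 spanning together with e_0 a totally isotropic 2-plane. -/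
open Matrix

noncomputable section

/-- The orthogonal group `O(2,n)`. -/
def Ogrp (n : ℕ) : Set (Matrix (Fin (n+2)) (Fin (n+2)) ℝ) :=
  {g | ∀ u v, Bf n (g *ᵥ u) (g *ᵥ v) = Bf n u v}

/-- The parabolic subgroup `P < O(2,n)` stabilizing the isotropic line `ℝe₀`. -/
def Pgrp (n : ℕ) : Set (Matrix (Fin (n+2)) (Fin (n+2)) ℝ) :=
  {g | g ∈ Ogrp n ∧ ∃ c : ℝ, c ≠ 0 ∧ g *ᵥ eV n 0 = c • eV n 0}

set_option maxRecDepth 4000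

namespace P5

def i0 (n : ℕ) : Fin (n+2) := ⟨0, by omega⟩
def i1 (n : ℕ) : Fin (n+2) := ⟨1, by omega⟩
def iN (n : ℕ) : Fin (n+2) := ⟨n, by omega⟩
def iL (n : ℕ) : Fin (n+2) := ⟨n+1, by omega⟩

lemma jmat_eq (n : ℕ) (hn : 3 ≤ n) (i j : Fin (n+2)) :
    Jmat n i j = (if i = i0 n ∧ j = iL n then 1 else 0)
      + (if i = iL n ∧ j = i0 n then 1 else 0)
      + (if i = i1 n ∧ j = iN n then 1 else 0)
      + (if i = iN n ∧ j = i1 n then 1 else 0)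
      + (if i = j ∧ 2 ≤ i.val ∧ i.val ≤ n-1 then 1 else 0) := by
  have hi := i.isLt
  have hj := j.isLt
  simp only [Jmat, Fin.ext_iff, i0, i1, iN, iL]
  split_ifs <;> first | omega | norm_num

lemma bf_formula (n : ℕ) (hn : 3 ≤ n) (u w : Fin (n+2) → ℝ) :
    Bf n u w = u (i0 n) * w (iL n) + u (iL n) * w (i0 n)
      + u (i1 n) * w (iN n) + u (iN n) * w (i1 n)
      + ∑ i : Fin (n+2), (if 2 ≤ i.val ∧ i.val ≤ n-1 then u i * w i else 0) := by
  have h0 : Bf n u w = ∑ i : Fin (n+2), ∑ j : Fin (n+2), u i * (Jmat n i j * w j) := by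
    simp [Bf, dotProduct, mulVec, Finset.mul_sum]
  rw [h0]
  have h : ∀ i j : Fin (n+2), u i * (Jmat n i j * w j) =
      (if i = i0 n ∧ j = iL n then u i * w j else 0)
      + (if i = iL n ∧ j = i0 n then u i * w j else 0)
      + (if i = i1 n ∧ j = iN n then u i * w j else 0)
      + (if i = iN n ∧ j = i1 n then u i * w j else 0)
      + (if i = j ∧ 2 ≤ i.val ∧ i.val ≤ n-1 then u i * w j else 0) := by
    intro i j
    rw [jmat_eq n hn i j]
    split_ifs <;> ring
  simp only [h, Finset.sum_add_distrib]
  have c1 : ∀ (a b : Fin (n+2)),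
      ∑ i : Fin (n+2), ∑ j : Fin (n+2), (if i = a ∧ j = b then u i * w j else 0) = u a * w b := by
    intro a b; simp [ite_and]
  have c2 : ∑ i : Fin (n+2), ∑ j : Fin (n+2),
      (if i = j ∧ 2 ≤ i.val ∧ i.val ≤ n-1 then u i * w j else 0)
      = ∑ i : Fin (n+2), (if 2 ≤ i.val ∧ i.val ≤ n-1 then u i * w i else 0) := by
    apply Finset.sum_congr rfl
    intro i _
    rw [Finset.sum_eq_single i]
    · by_cases hc : 2 ≤ i.val ∧ i.val ≤ n-1 <;> simp [hc]
    · intro j _ hj; simp [Ne.symm hj]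
    · simp
  rw [c1, c1, c1, c1, c2]


/-- translation-type element: e1 ↦ e1 + t e0, e_{n+1} ↦ e_{n+1} - t e_n -/
def Emat (n : ℕ) (t : ℝ) : Matrix (Fin (n+2)) (Fin (n+2)) ℝ :=
  fun i j => (if j = i then 1 else 0)
    + (if i = i0 n then (if j = i1 n then t else 0) else 0)
    + (if i = iN n then (if j = iL n then -t else 0) else 0)

/-- swap e1 ↔ e_n -/
def Smat (n : ℕ) : Matrix (Fin (n+2)) (Fin (n+2)) ℝ :=
  fun i j => if i = i1 n then (if j = iN n then 1 else 0)
    else if i = iN n then (if j = i1 n then 1 else 0)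
    else (if j = i then 1 else 0)

/-- unipotent of the Levi O(1,n-1) -/
def Gmat (n : ℕ) (y : Fin (n+2) → ℝ) (lam : ℝ) : Matrix (Fin (n+2)) (Fin (n+2)) ℝ :=
  fun i j => (if j = i then 1 else 0)
    + (if (2 ≤ i.val ∧ i.val ≤ n-1) ∧ j = i1 n then -(y i) else 0)
    + (if i = iN n then (if j = i1 n then lam else 0) else 0)
    + (if i = iN n then (if 2 ≤ j.val ∧ j.val ≤ n-1 then y j else 0) else 0)

lemma Emat_mulVec (n : ℕ) (t : ℝ) (u : Fin (n+2) → ℝ) (i : Fin (n+2)) :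
    (Emat n t *ᵥ u) i = u i + (if i = i0 n then t * u (i1 n) else 0)
      + (if i = iN n then -t * u (iL n) else 0) := by
  by_cases h0 : i = i0 n <;> by_cases hN : i = iN n <;>
    simp [Emat, mulVec, dotProduct, add_mul, Finset.sum_add_distrib, ite_mul, h0, hN]

lemma Smat_mulVec (n : ℕ) (u : Fin (n+2) → ℝ) (i : Fin (n+2)) :
    (Smat n *ᵥ u) i = if i = i1 n then u (iN n) else if i = iN n then u (i1 n) else u i := by
  by_cases h1 : i = i1 n <;> by_cases hN : i = iN n <;>
    simp [Smat, mulVec, dotProduct, ite_mul, h1, hN]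

lemma Gmat_mulVec (n : ℕ) (y : Fin (n+2) → ℝ) (lam : ℝ) (u : Fin (n+2) → ℝ) (i : Fin (n+2)) :
    (Gmat n y lam *ᵥ u) i = u i
      + (if 2 ≤ i.val ∧ i.val ≤ n-1 then -(y i) * u (i1 n) else 0)
      + (if i = iN n then lam * u (i1 n) else 0)
      + (if i = iN n then ∑ j : Fin (n+2), (if 2 ≤ j.val ∧ j.val ≤ n-1 then y j * u j else 0) else 0) := by
  by_cases hm : 2 ≤ i.val ∧ i.val ≤ n-1 <;> by_cases hN : i = iN n <;>
    simp [Gmat, mulVec, dotProduct, add_mul, Finset.sum_add_distrib, ite_mul, ite_and, hm, hN,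
      Finset.mul_sum]

set_option linter.unusedSectionVars false

section
variable {n : ℕ} (hn : 3 ≤ n)
include hn

lemma ne10 : i1 n ≠ i0 n := by simp [i0, i1, Fin.ext_iff]
lemma ne01 : i0 n ≠ i1 n := by simp [i0, i1, Fin.ext_iff]
lemma neN0 : iN n ≠ i0 n := by simp [i0, iN, Fin.ext_iff]; omega
lemma ne0N : i0 n ≠ iN n := by simp [i0, iN, Fin.ext_iff]; omega
lemma neL0 : iL n ≠ i0 n := by simp [i0, iL, Fin.ext_iff]
lemma ne0L : i0 n ≠ iL n := by simp [i0, iL, Fin.ext_iff]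
lemma neN1 : iN n ≠ i1 n := by simp [i1, iN, Fin.ext_iff]; omega
lemma ne1N : i1 n ≠ iN n := by simp [i1, iN, Fin.ext_iff]; omega
lemma neL1 : iL n ≠ i1 n := by simp [i1, iL, Fin.ext_iff]; omega
lemma ne1L : i1 n ≠ iL n := by simp [i1, iL, Fin.ext_iff]; omega
lemma neLN : iL n ≠ iN n := by simp [iN, iL, Fin.ext_iff]
lemma neNL : iN n ≠ iL n := by simp [iN, iL, Fin.ext_iff]
lemma nmid0 : ¬(2 ≤ (i0 n).val ∧ (i0 n).val ≤ n-1) := by simp [i0]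
lemma nmid1 : ¬(2 ≤ (i1 n).val ∧ (i1 n).val ≤ n-1) := by simp [i1]
lemma nmidN : ¬(2 ≤ (iN n).val ∧ (iN n).val ≤ n-1) := by simp [iN]; omega
lemma nmidL : ¬(2 ≤ (iL n).val ∧ (iL n).val ≤ n-1) := by simp [iL]
lemma midne (i : Fin (n+2)) (h : 2 ≤ i.val ∧ i.val ≤ n-1) :
    i ≠ i0 n ∧ i ≠ i1 n ∧ i ≠ iN n ∧ i ≠ iL n := by
  refine ⟨?_, ?_, ?_, ?_⟩ <;> (intro heq; have := congrArg Fin.val heq; simp only [i0, i1, iN, iL] at this; omega)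

lemma E_preserves (t : ℝ) (u w : Fin (n+2) → ℝ) :
    Bf n (Emat n t *ᵥ u) (Emat n t *ᵥ w) = Bf n u w := by
  rw [bf_formula n hn, bf_formula n hn]
  have hmid : ∀ i : Fin (n+2),
      (if 2 ≤ i.val ∧ i.val ≤ n-1 then (Emat n t *ᵥ u) i * (Emat n t *ᵥ w) i else 0)
      = (if 2 ≤ i.val ∧ i.val ≤ n-1 then u i * w i else 0) := by
    intro i
    by_cases h : 2 ≤ i.val ∧ i.val ≤ n-1
    · obtain ⟨h0, _, hN, _⟩ := midne hn i h
      simp [h, Emat_mulVec, h0, hN]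
    · simp [h]
  rw [Finset.sum_congr rfl (fun i _ => hmid i)]
  simp only [Emat_mulVec, ne10 hn, ne01 hn, neN0 hn, ne0N hn, neL0 hn, ne0L hn, neN1 hn,
    ne1N hn, neL1 hn, ne1L hn, neLN hn, neNL hn, if_pos rfl, if_neg, if_true, if_false,
    ite_true, ite_false, ne_eq, not_false_eq_true]
  ring

lemma S_preserves (u w : Fin (n+2) → ℝ) :
    Bf n (Smat n *ᵥ u) (Smat n *ᵥ w) = Bf n u w := by
  rw [bf_formula n hn, bf_formula n hn]
  have hmid : ∀ i : Fin (n+2),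
      (if 2 ≤ i.val ∧ i.val ≤ n-1 then (Smat n *ᵥ u) i * (Smat n *ᵥ w) i else 0)
      = (if 2 ≤ i.val ∧ i.val ≤ n-1 then u i * w i else 0) := by
    intro i
    by_cases h : 2 ≤ i.val ∧ i.val ≤ n-1
    · obtain ⟨_, h1, hN, _⟩ := midne hn i h
      simp [h, Smat_mulVec, h1, hN]
    · simp [h]
  rw [Finset.sum_congr rfl (fun i _ => hmid i)]
  simp only [Smat_mulVec, ne10 hn, ne01 hn, neN0 hn, ne0N hn, neL0 hn, ne0L hn, neN1 hn,
    ne1N hn, neL1 hn, ne1L hn, neLN hn, neNL hn, if_pos rfl, if_neg, if_true, if_false,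
    ite_true, ite_false, ne_eq, not_false_eq_true]
  ring


lemma G_preserves (y : Fin (n+2) → ℝ) (lam : ℝ)
    (hlam : 2*lam + ∑ i : Fin (n+2), (if 2 ≤ i.val ∧ i.val ≤ n-1 then y i * y i else 0) = 0)
    (u w : Fin (n+2) → ℝ) :
    Bf n (Gmat n y lam *ᵥ u) (Gmat n y lam *ᵥ w) = Bf n u w := by
  rw [bf_formula n hn, bf_formula n hn]
  have hmid : ∀ i : Fin (n+2),
      (if 2 ≤ i.val ∧ i.val ≤ n-1 then (Gmat n y lam *ᵥ u) i * (Gmat n y lam *ᵥ w) i else 0)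
      = (if 2 ≤ i.val ∧ i.val ≤ n-1 then u i * w i else 0)
        - w (i1 n) * (if 2 ≤ i.val ∧ i.val ≤ n-1 then y i * u i else 0)
        - u (i1 n) * (if 2 ≤ i.val ∧ i.val ≤ n-1 then y i * w i else 0)
        + (u (i1 n) * w (i1 n)) * (if 2 ≤ i.val ∧ i.val ≤ n-1 then y i * y i else 0) := by
    intro i
    by_cases h : 2 ≤ i.val ∧ i.val ≤ n-1
    · obtain ⟨_, _, hN, _⟩ := midne hn i h
      simp [h, Gmat_mulVec, hN]
      ring
    · simp [h]
  rw [Finset.sum_congr rfl (fun i _ => hmid i)]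
  rw [Finset.sum_add_distrib, Finset.sum_sub_distrib, Finset.sum_sub_distrib,
    ← Finset.mul_sum, ← Finset.mul_sum, ← Finset.mul_sum]
  simp only [Gmat_mulVec, ne10 hn, ne01 hn, neN0 hn, ne0N hn, neL0 hn, ne0L hn, neN1 hn,
    ne1N hn, neL1 hn, ne1L hn, neLN hn, neNL hn, nmid0 hn, nmid1 hn, nmidN hn, nmidL hn,
    if_pos rfl, if_neg, if_true, if_false, ite_true, ite_false, ne_eq, not_false_eq_true]
  linear_combination (u (i1 n) * w (i1 n)) * hlam

end

lemma fin0 (n : ℕ) : (0 : Fin (n+2)) = i0 n := rfl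
lemma fin1 (n : ℕ) : (1 : Fin (n+2)) = i1 n := by
  have : (1 : Fin (n+2)).val = 1 := rfl
  exact Fin.ext this

lemma eV_apply (n : ℕ) (a i : Fin (n+2)) : eV n a i = if i = a then 1 else 0 := by
  simp [eV, Pi.single_apply]

section
variable {n : ℕ} (hn : 3 ≤ n)
include hn

lemma bf_eV0 (u : Fin (n+2) → ℝ) : Bf n u (eV n 0) = u (iL n) := by
  rw [bf_formula n hn]
  rw [Finset.sum_eq_zero (fun i _ => ?_)]
  · simp [eV_apply, fin0, ne10 hn, neN0 hn, neL0 hn]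
  · rcases eq_or_ne i (i0 n) with h | h
    · subst h; simp [nmid0 hn]
    · simp [eV_apply, fin0, h]

lemma Emat_e0 (t : ℝ) : Emat n t *ᵥ eV n 0 = eV n 0 := by
  funext i
  rw [Emat_mulVec]
  simp [eV_apply, fin0, ne10 hn, neL0 hn]

lemma Smat_e0 : Smat n *ᵥ eV n 0 = eV n 0 := by
  funext i
  rw [Smat_mulVec]
  rcases eq_or_ne i (i1 n) with h1 | h1
  · subst h1; simp [eV_apply, fin0, ne10 hn, neN0 hn]
  · rcases eq_or_ne i (iN n) with hN | hN
    · subst hN; simp [eV_apply, fin0, ne10 hn, neN0 hn]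
    · simp [h1, hN]

lemma Gmat_e0 (y : Fin (n+2) → ℝ) (lam : ℝ) : Gmat n y lam *ᵥ eV n 0 = eV n 0 := by
  funext i
  rw [Gmat_mulVec]
  have hs : ∑ j : Fin (n+2), (if 2 ≤ j.val ∧ j.val ≤ n-1 then y j * eV n 0 j else 0) = 0 := by
    refine Finset.sum_eq_zero fun j _ => ?_
    rcases eq_or_ne j (i0 n) with h | h
    · subst h; simp [nmid0 hn]
    · simp [eV_apply, fin0, h]
  rw [hs]
  simp [eV_apply, fin0, ne10 hn]

lemma Efin (a b : ℝ) (hb : b ≠ 0) :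
    Emat n (-a/b) *ᵥ (fun i => if i = i0 n then a else if i = i1 n then b else 0)
      = b • eV n 1 := by
  funext i
  rw [Emat_mulVec]
  simp only [Pi.smul_apply, smul_eq_mul, eV_apply, fin1]
  rcases eq_or_ne i (i0 n) with h0 | h0
  · subst h0
    simp [ne10 hn, ne01 hn, ne0N hn]
    field_simp
    ring
  · rcases eq_or_ne i (i1 n) with h1 | h1
    · subst h1
      simp [ne10 hn, ne1N hn]
    · rcases eq_or_ne i (iN n) with hN | hN
      · subst hN
        simp [neN0 hn, neN1 hn, neL0 hn, neL1 hn]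
      · simp [h0, h1, hN]

end

lemma hsplit (i : Fin (n+2)) :
    i = i0 n ∨ i = i1 n ∨ (2 ≤ i.val ∧ i.val ≤ n-1) ∨ i = iN n ∨ i = iL n := by
  have hlt := i.isLt
  have h5 : i.val = 0 ∨ i.val = 1 ∨ (2 ≤ i.val ∧ i.val ≤ n-1) ∨ i.val = n ∨ i.val = n+1 := by
    omega
  rcases h5 with h|h|h|h|h
  · exact Or.inl (Fin.ext h)
  · exact Or.inr (Or.inl (Fin.ext h))
  · exact Or.inr (Or.inr (Or.inl h))
  · exact Or.inr (Or.inr (Or.inr (Or.inl (Fin.ext h))))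
  · exact Or.inr (Or.inr (Or.inr (Or.inr (Fin.ext h))))

end P5

open P5

/-- `P` acts transitively on the isotropic lines `ℓ ≠ ℝe₀` spanning,
together with `e₀`, a totally isotropic 2-plane: every isotropic vector `v` orthogonal
to `e₀` and not in `ℝe₀` can be mapped by some `p ∈ P` to a nonzero multiple of `e₁`. -/
theorem P_transitive_on_photons_through_e0 (n : ℕ) (hn : 3 ≤ n)
    (v : Fin (n+2) → ℝ) (hQ : Bf n v v = 0) (hperp : Bf n v (eV n 0) = 0)
    (hv : v ∉ Submodule.span ℝ {eV n 0}) :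
    ∃ p ∈ Pgrp n, ∃ c : ℝ, c ≠ 0 ∧ p *ᵥ v = c • eV n 1 := by
  have hvL : v (iL n) = 0 := by rw [← bf_eV0 hn v]; exact hperp
  have hQ2 : v (i1 n) * v (iN n) + v (iN n) * v (i1 n)
      + ∑ i : Fin (n+2), (if 2 ≤ i.val ∧ i.val ≤ n-1 then v i * v i else 0) = 0 := by
    have h := hQ
    rw [bf_formula n hn, hvL] at h
    linear_combination h
  by_cases h1 : v (i1 n) = 0
  · -- case v₁ = 0 : use the swap
    have hSvv : ∑ i : Fin (n+2), (if 2 ≤ i.val ∧ i.val ≤ n-1 then v i * v i else 0) = 0 := by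
      rw [h1] at hQ2; linear_combination hQ2
    have hmid0 : ∀ i : Fin (n+2), 2 ≤ i.val ∧ i.val ≤ n-1 → v i = 0 := by
      intro i hi
      have hnn : ∀ j ∈ Finset.univ,
          (0:ℝ) ≤ (if 2 ≤ j.val ∧ j.val ≤ n-1 then v j * v j else 0) := by
        intro j _; by_cases h : 2 ≤ j.val ∧ j.val ≤ n-1 <;> simp [h, mul_self_nonneg]
      have := (Finset.sum_eq_zero_iff_of_nonneg hnn).mp hSvv i (Finset.mem_univ i)
      rw [if_pos hi] at this
      exact mul_self_eq_zero.mp this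
    have hvN : v (iN n) ≠ 0 := by
      intro hN
      apply hv
      rw [Submodule.mem_span_singleton]
      refine ⟨v (i0 n), ?_⟩
      funext i
      simp only [Pi.smul_apply, smul_eq_mul, eV_apply, fin0]
      rcases hsplit i with h|h|h|h|h
      · subst h; simp
      · subst h; simp [ne10 hn, h1]
      · obtain ⟨h0, _, _, _⟩ := midne hn i h
        simp [h0, hmid0 i h]
      · subst h; simp [neN0 hn, hN]
      · subst h; simp [neL0 hn, hvL]
    have hSv : Smat n *ᵥ v
        = fun i => if i = i0 n then v (i0 n) else if i = i1 n then v (iN n) else 0 := by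
      funext i
      rw [Smat_mulVec]
      rcases hsplit i with h|h|h|h|h
      · subst h; simp [ne01 hn, ne0N hn]
      · subst h; simp [ne10 hn]
      · obtain ⟨h0, h1', hN, _⟩ := midne hn i h
        simp [h0, h1', hN, hmid0 i h]
      · subst h; simp [neN0 hn, neN1 hn, h1]
      · subst h; simp [neL0 hn, neL1 hn, neLN hn, hvL]
    refine ⟨Emat n (-v (i0 n)/v (iN n)) * Smat n, ⟨?_, 1, one_ne_zero, ?_⟩,
      v (iN n), hvN, ?_⟩
    · intro u w
      rw [← mulVec_mulVec, ← mulVec_mulVec, E_preserves hn, S_preserves hn]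
    · rw [← mulVec_mulVec, Smat_e0 hn, Emat_e0 hn, one_smul]
    · rw [← mulVec_mulVec, hSv, Efin hn _ _ hvN]
  · -- case v₁ ≠ 0 : use the Levi unipotent
    set y : Fin (n+2) → ℝ :=
      fun i => if 2 ≤ i.val ∧ i.val ≤ n-1 then v i / v (i1 n) else 0 with hy
    set lam : ℝ := v (iN n) / v (i1 n) with hlamdef
    have hyy : ∑ i : Fin (n+2), (if 2 ≤ i.val ∧ i.val ≤ n-1 then y i * y i else 0)
        = (∑ i : Fin (n+2), (if 2 ≤ i.val ∧ i.val ≤ n-1 then v i * v i else 0))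
          / (v (i1 n) * v (i1 n)) := by
      rw [Finset.sum_div]
      refine Finset.sum_congr rfl fun i _ => ?_
      by_cases h : 2 ≤ i.val ∧ i.val ≤ n-1
      · simp only [hy, if_pos h]
        rw [div_mul_div_comm]
      · simp [h]
    have hSvv : ∑ i : Fin (n+2), (if 2 ≤ i.val ∧ i.val ≤ n-1 then v i * v i else 0)
        = -(2 * (v (i1 n) * v (iN n))) := by linear_combination hQ2
    have hlam : 2*lam
        + ∑ i : Fin (n+2), (if 2 ≤ i.val ∧ i.val ≤ n-1 then y i * y i else 0) = 0 := by
      rw [hyy, hSvv, hlamdef]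
      field_simp
      ring
    have hsum : ∑ j : Fin (n+2), (if 2 ≤ j.val ∧ j.val ≤ n-1 then y j * v j else 0)
        = (∑ j : Fin (n+2), (if 2 ≤ j.val ∧ j.val ≤ n-1 then v j * v j else 0))
          / v (i1 n) := by
      rw [Finset.sum_div]
      refine Finset.sum_congr rfl fun j _ => ?_
      by_cases h : 2 ≤ j.val ∧ j.val ≤ n-1
      · simp only [hy, if_pos h]
        rw [div_mul_eq_mul_div]
      · simp [h]
    have hGv : Gmat n y lam *ᵥ v
        = fun i => if i = i0 n then v (i0 n) else if i = i1 n then v (i1 n) else 0 := by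
      funext i
      rw [Gmat_mulVec]
      rcases hsplit i with h|h|h|h|h
      · subst h; simp [nmid0 hn, ne0N hn]
      · subst h; simp [nmid1 hn, ne1N hn, ne10 hn]
      · obtain ⟨h0, h1', hN, _⟩ := midne hn i h
        simp only [if_pos h, if_neg hN, if_neg h0, if_neg h1', add_zero]
        simp only [hy, if_pos h]
        field_simp
        ring
      · subst h
        rw [hsum, hSvv]
        simp only [if_neg (nmidN hn), if_pos rfl, add_zero, hlamdef,
          if_neg (neN0 hn), if_neg (neN1 hn)]
        field_simp
        rw [if_pos trivial, if_pos trivial]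
        ring
      · subst h
        simp [nmidL hn, neLN hn, neL0 hn, neL1 hn, hvL]
    refine ⟨Emat n (-v (i0 n)/v (i1 n)) * Gmat n y lam, ⟨?_, 1, one_ne_zero, ?_⟩,
      v (i1 n), h1, ?_⟩
    · intro u w
      rw [← mulVec_mulVec, ← mulVec_mulVec, E_preserves hn, G_preserves hn y lam hlam]
    · rw [← mulVec_mulVec, Gmat_e0 hn, Emat_e0 hn, one_smul]
    · rw [← mulVec_mulVec, hGv, Efin hn _ _ h1]
end
end

section
/- Let λ ∈ ℝ with λ ≠ 0 and |λ| ≠ 1, and let q = diag(λ, λ, 1, …, 1, λ^{−1}, λ^{−1}) ∈ GL_{n+2}(ℝ). Then every polynomial function f on M_{n+2}(ℝ) (a polynomial in the matrix entries, with real coefficients) that vanishes on the set {q^k : k ∈ ℤ} also vanishes on the set {diag(x, x, 1, …, 1, x^{−1}, x^{−1}) : x ∈ ℝ, x ≠ 0}. In other words, the Zariski closure of the cyclic group generated by q contains the one-parameter group {diag(x, x, 1, …, 1, x^{−1}, x^{−1}) : x ∈ ℝ, x ≠ 0}. -/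
open Matrix

noncomputable section

/-- Evaluation of a polynomial in the matrix entries at a matrix. -/
def evalM (n : ℕ) (f : MvPolynomial (Fin (n+2) × Fin (n+2)) ℝ)
    (M : Matrix (Fin (n+2)) (Fin (n+2)) ℝ) : ℝ :=
  MvPolynomial.eval (fun q => M q.1 q.2) f

/-- The diagonal matrix `diag(x, x, 1, …, 1, x⁻¹, x⁻¹)`. -/
def qdiag (n : ℕ) (x : ℝ) : Matrix (Fin (n+2)) (Fin (n+2)) ℝ :=
  Matrix.diagonal fun i => if i.val ≤ 1 then x else if n ≤ i.val then x⁻¹ else 1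

lemma qdiag_pow (n : ℕ) (x : ℝ) (k : ℕ) : (qdiag n x) ^ k = qdiag n (x ^ k) := by
  rw [qdiag, qdiag, Matrix.diagonal_pow]
  have : ((fun i : Fin (n+2) =>
      if i.val ≤ 1 then x else if n ≤ i.val then x⁻¹ else 1) ^ k)
      = fun i : Fin (n+2) =>
      if i.val ≤ 1 then x ^ k else if n ≤ i.val then (x ^ k)⁻¹ else 1 := by
    funext i
    rw [Pi.pow_apply]
    split_ifs <;> simp [inv_pow]
  rw [this]

/-- For `λ ≠ 0` with `|λ| ≠ 1` and `q = diag(λ, λ, 1, …, 1, λ⁻¹, λ⁻¹)`,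
every real polynomial in the matrix entries vanishing on `{qᵏ : k ∈ ℤ}` also vanishes on
the one-parameter group `{diag(x, x, 1, …, 1, x⁻¹, x⁻¹) : x ≠ 0}`: the Zariski closure of
`⟨q⟩` contains this one-parameter group. -/
theorem zariski_closure_of_cyclic_group (n : ℕ) (hn : 3 ≤ n)
    (lam : ℝ) (hl0 : lam ≠ 0) (hl1 : |lam| ≠ 1)
    (f : MvPolynomial (Fin (n+2) × Fin (n+2)) ℝ)
    (hf : ∀ k : ℤ, evalM n f ((qdiag n lam) ^ k) = 0) :
    ∀ x : ℝ, x ≠ 0 → evalM n f (qdiag n x) = 0 := by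
  classical
  -- the two-variable polynomial obtained by substituting the entries of `qdiag`
  set g : (Fin (n+2) × Fin (n+2)) → MvPolynomial (Fin 2) ℝ := fun q =>
    if q.1 = q.2 then
      (if q.1.val ≤ 1 then MvPolynomial.X 0
       else if n ≤ q.1.val then MvPolynomial.X 1 else 1)
    else 0 with hg
  set P : MvPolynomial (Fin 2) ℝ := MvPolynomial.eval₂ MvPolynomial.C g f with hP
  have key : ∀ t : ℝ, MvPolynomial.eval ![t, t⁻¹] P = evalM n f (qdiag n t) := by
    intro t
    rw [hP, MvPolynomial.eval_eval₂]
    rw [evalM]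
    rw [show ((MvPolynomial.eval ![t, t⁻¹]).comp
        (MvPolynomial.C : ℝ →+* MvPolynomial (Fin 2) ℝ)) =
        RingHom.id ℝ by ext r; simp]
    rw [MvPolynomial.eval₂_id]
    have hfun : (fun s => MvPolynomial.eval ![t, t⁻¹] (g s))
        = fun q : Fin (n+2) × Fin (n+2) => qdiag n t q.1 q.2 := by
      funext q
      rw [hg]
      simp only [qdiag, Matrix.diagonal_apply]
      by_cases h : q.1 = q.2
      · simp only [h, if_pos rfl]
        split_ifs <;> simp [Matrix.cons_val_zero, Matrix.cons_val_one]
      · simp [h]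
    rw [hfun]
  set N : ℕ := P.totalDegree with hN
  -- the one-variable polynomial `x^N * P(x, x⁻¹)`
  set Q : Polynomial ℝ := P.support.sum (fun m =>
    Polynomial.C (P.coeff m) * Polynomial.X ^ (N - m 1 + m 0)) with hQ
  have hmem : ∀ m ∈ P.support, m 1 ≤ N := by
    intro m hm
    refine le_trans ?_ (MvPolynomial.le_totalDegree hm)
    by_cases h : m 1 = 0
    · simp [h]
    · exact Finset.single_le_sum (f := fun i => m i) (fun _ _ => Nat.zero_le _)
        (Finsupp.mem_support_iff.mpr h)
  have hQeval : ∀ t : ℝ, t ≠ 0 →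
      Polynomial.eval t Q = t ^ N * MvPolynomial.eval ![t, t⁻¹] P := by
    intro t ht
    rw [hQ, MvPolynomial.eval_eq', Polynomial.eval_finset_sum, Finset.mul_sum]
    refine Finset.sum_congr rfl fun m hm => ?_
    rw [Fin.prod_univ_two]
    simp only [Polynomial.eval_mul, Polynomial.eval_C, Polynomial.eval_pow,
      Polynomial.eval_X, Matrix.cons_val_zero, Matrix.cons_val_one, Matrix.head_cons]
    rw [pow_add, pow_sub₀ t ht (hmem m hm), inv_pow]
    ring
  -- `Q` has infinitely many roots, hence is zero
  have hQzero : Q = 0 := by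
    apply Polynomial.eq_zero_of_infinite_isRoot
    have hinj : Function.Injective (fun k : ℕ => |lam| ^ k) := by
      have h0 : 0 < |lam| := abs_pos.mpr hl0
      rcases lt_or_gt_of_ne hl1 with h | h
      · exact (pow_right_strictAnti₀ h0 h).injective
      · exact (pow_right_strictMono₀ h).injective
    have hinj' : Function.Injective (fun k : ℕ => lam ^ k) := by
      intro a b hab
      apply hinj
      simp only [← abs_pow]
      exact congrArg abs hab
    apply Set.infinite_of_injective_forall_mem (f := fun k : ℕ => lam ^ k) hinj'
    intro k
    have hk : evalM n f (qdiag n (lam ^ k)) = 0 := by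
      have := hf (k : ℤ)
      rwa [zpow_natCast, qdiag_pow] at this
    have := hQeval (lam ^ k) (pow_ne_zero _ hl0)
    simp only [Set.mem_setOf_eq, Polynomial.IsRoot]
    rw [this, key, hk, mul_zero]
  intro x hx
  have := hQeval x hx
  rw [hQzero, Polynomial.eval_zero] at this
  rw [← key x]
  rcases mul_eq_zero.mp this.symm with h | h
  · exact absurd h (pow_ne_zero _ hx)
  · exact h
end
end
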